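/- arXiv:1604.05090 — 2 statements merged into one kernel-verified Lean document; each statement's English description precedes it below -/
import Mathlib

section
/- For every integer n ≥ 2, with N = 2^n, there exist a deterministic comparison matrix P for N players and two draws σ, σ' such that wp(1,P,σ) = 1 = wp(1,P,σ'), there is a polynomial Q with real coefficients satisfying wp_ε(1,P,σ) ≤ 1 − (N/2)·ε + ε²·Q(ε) for all ε ∈ (0,1), and wp_ε(1,P,σ') > 1 − (2n−1)·ε for all ε ∈ (0,1). (One may take the unbalanced tournament U_n with σ = (1,2,…,2^n) and σ' = (2^n, 2, 3, …, 2^n−1, 1).) -/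
/-- A perfect (balanced) binary tree of depth `n` with leaves labelled by `α`. -/
inductive BT (α : Type) : ℕ → Type
  | leaf : α → BT α 0
  | node {n : ℕ} : BT α n → BT α n → BT α (n + 1)

namespace BT

/-- The list of leaf labels, from left to right. -/
def leaves {α : Type} : ∀ {n : ℕ}, BT α n → List α
  | _, .leaf a => [a]
  | _, .node L R => L.leaves ++ R.leaves

/-- Relabel the leaves of a tree. -/
def map {α β : Type} (f : α → β) : ∀ {n : ℕ}, BT α n → BT β n
  | _, .leaf a => .leaf (f a)
  | _, .node L R => .node (L.map f) (R.map f)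

end BT

/-- Two trees represent the same draw iff one can be obtained from the other by
swapping the two children subtrees at internal nodes. -/
def BTequiv {α : Type} : ∀ {n : ℕ}, BT α n → BT α n → Prop
  | 0, .leaf a, .leaf b => a = b
  | _ + 1, .node L R, .node L' R' =>
      (BTequiv L L' ∧ BTequiv R R') ∨ (BTequiv L R' ∧ BTequiv R L')

/-- A draw: each of the `N` players occurs exactly once among the leaves. -/
def IsDraw {N n : ℕ} (t : BT (Fin N) n) : Prop :=
  ∀ i : Fin N, t.leaves.count i = 1

/-- The winning distribution of a knockout tournament: `wd P t i` is the probability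
that player `i` wins the (sub)tournament with draw `t` and comparison matrix `P`. -/
noncomputable def wd {N : ℕ} (P : Fin N → Fin N → ℝ) :
    ∀ {n : ℕ}, BT (Fin N) n → Fin N → ℝ
  | _, .leaf j => fun i => if i = j then 1 else 0
  | _, .node L R => fun i =>
      wd P L i * (∑ j, wd P R j * P i j) + wd P R i * (∑ j, wd P L j * P i j)

/-- `P` is a comparison matrix. -/
def IsCompMatrix {N : ℕ} (P : Fin N → Fin N → ℝ) : Prop :=
  ∀ i j : Fin N, i ≠ j → 0 ≤ P i j ∧ P i j ≤ 1 ∧ P i j + P j i = 1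

/-- `P` is deterministic: every off-diagonal entry is 0 or 1. -/
def IsDet {N : ℕ} (P : Fin N → Fin N → ℝ) : Prop :=
  ∀ i j : Fin N, i ≠ j → P i j = 0 ∨ P i j = 1

/-- The set `𝒫(P,ε)` of ε-perturbations of `P`. -/
def perturbs {N : ℕ} (P : Fin N → Fin N → ℝ) (ε : ℝ) : Set (Fin N → Fin N → ℝ) :=
  {P' | IsCompMatrix P' ∧ ∀ i j : Fin N, i ≠ j → |P' i j - P i j| ≤ ε}

/-- The ε-guaranteed winning probability `wp_ε(i,P,σ)`. -/
noncomputable def wpe {N n : ℕ} (i : Fin N) (P : Fin N → Fin N → ℝ) (ε : ℝ)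
    (t : BT (Fin N) n) : ℝ :=
  sInf ((fun P' => wd P' t i) '' perturbs P ε)

/-- The comparison matrix of the hard `n`-round tournament `H_n` (players 0-indexed):
for `i < j`, player `i` beats player `j` iff `i = j - 2 ^ v` where `2 ^ v` is the largest
power of 2 dividing `j` (in 0-indexed numbering). -/
noncomputable def hardP (n : ℕ) : Fin (2 ^ n) → Fin (2 ^ n) → ℝ := fun i j =>
  if i = j then 0
  else if (i : ℕ) < (j : ℕ) then
    (if (i : ℕ) + 2 ^ padicValNat 2 (j : ℕ) = (j : ℕ) then 1 else 0)
  else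
    (if (j : ℕ) + 2 ^ padicValNat 2 (i : ℕ) = (i : ℕ) then 0 else 1)

/-- The tree of depth `n` whose leaves are `s, s+1, …, s + 2^n - 1` from left to right. -/
def ordTree : (n : ℕ) → ℕ → BT ℕ n
  | 0, s => .leaf s
  | n + 1, s => .node (ordTree n s) (ordTree n (s + 2 ^ n))

/-- The identity draw, placing players `0, 1, …, 2^n - 1` on the leaves in order. -/
def idDraw (n : ℕ) : BT (Fin (2 ^ n)) n :=
  (ordTree n 0).map (fun k => ⟨k % 2 ^ n, Nat.mod_lt _ (by positivity)⟩)

/-- `f_p(x,y) = p(x+y) + (1-2p)xy`. -/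
def fp (p x y : ℝ) : ℝ := p * (x + y) + (1 - 2 * p) * x * y

/-- `B_p` on trees with real leaf labels. -/
noncomputable def Bp (p : ℝ) : ∀ {n : ℕ}, BT ℝ n → ℝ
  | _, .leaf x => x
  | _, .node L R => fp p (Bp p L) (Bp p R)

/-- Group a list into consecutive pairs. -/
def pairList {α : Type} : List α → List (α × α)
  | a :: b :: rest => (a, b) :: pairList rest
  | _ => []

/-- The first-round matches of a draw: the consecutive sibling pairs of leaves. -/
def firstPairs {α : Type} {n : ℕ} (t : BT α n) : List (α × α) := pairList t.leaves

/-- A draw is mixed (w.r.t. the set `B` of big players) if every first-round match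
pairs a big player with a small player. -/
def MixedDraw {N n : ℕ} (B : Finset (Fin N)) (t : BT (Fin N) n) : Prop :=
  ∀ q ∈ firstPairs t, ((q.1 ∈ B) ↔ q.2 ∉ B)

/-- Number of leaves labelled `1`. -/
noncomputable def ones {n : ℕ} (t : BT ℝ n) : ℕ := t.leaves.count 1

/-- All leaf labels are `0` or `1`. -/
def ZeroOne {n : ℕ} (t : BT ℝ n) : Prop := ∀ x ∈ t.leaves, x = 0 ∨ x = 1

/-- `P[kl←t]`: the matrix agreeing with `P` except `P k l = t` and `P l k = 1 - t`. -/
def updPair {N : ℕ} (P : Fin N → Fin N → ℝ) (k l : Fin N) (t : ℝ) :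
    Fin N → Fin N → ℝ :=
  fun i j => if i = k ∧ j = l then t else if i = l ∧ j = k then 1 - t else P i j

/-- Perturb a deterministic matrix: for each pair `(w, l) ∈ S` (winner first),
set `P w l = 1 - ε` and `P l w = ε`; other entries unchanged. -/
def detPerturb {N : ℕ} (P : Fin N → Fin N → ℝ) (S : Finset (Fin N × Fin N)) (ε : ℝ) :
    Fin N → Fin N → ℝ :=
  fun i j => if (i, j) ∈ S then 1 - ε else if (j, i) ∈ S then ε else P i j

/-- Swap the result of the single match between `a` and `b`. -/
def swapPair {N : ℕ} (P : Fin N → Fin N → ℝ) (a b : Fin N) : Fin N → Fin N → ℝ :=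
  fun i j => if i = a ∧ j = b then P b a else if i = b ∧ j = a then P a b else P i j

/-- The pair `(a,b)` (with `a` the winner) is crucial for `i` in `C(P,σ)`. -/
def Crucial {N n : ℕ} (P : Fin N → Fin N → ℝ) (σ : BT (Fin N) n) (i : Fin N)
    (a b : Fin N) : Prop :=
  a ≠ b ∧ P a b = 1 ∧ wd (swapPair P a b) σ i = 0

/-! In `parityMatrix _ 0` players of equal parity are ranked by their number, and odd players
beat even ones, except that `2k` beats `2k + 1`. In the identity draw player `0` wins only if
each of the `2 ^ n / 2` first-round matches `2k` vs `2k + 1` goes to the even player, since an odd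
survivor beats every even player afterwards; perturbing just these matches by `ε` gives
`wp_ε ≤ (1 - ε) ^ (2 ^ n / 2)`. If instead the even players fill one half of the draw and the odd
players the other, player `0` needs only its `n - 1` wins over even players, the `n - 1` wins of
player `1` in the odd half, and the final against player `1`; under any perturbation each of these
`2 n - 1` matches is won with probability at least `1 - ε`, so `wp_ε ≥ (1 - ε) ^ (2 n - 1)`. -/

open Finset

namespace BT

variable {α β : Type}

theorem leaves_map (f : α → β) {n : ℕ} (t : BT α n) : (t.map f).leaves = t.leaves.map f := by
  induction t with
  | leaf a => rfl
  | node L R ihL ihR => simp [map, leaves, ihL, ihR]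

theorem length_leaves {n : ℕ} (t : BT α n) : t.leaves.length = 2 ^ n := by
  induction t with
  | leaf a => rfl
  | node L R ihL ihR => simp [leaves, ihL, ihR, pow_succ, mul_two]

theorem nodup_node_iff {n : ℕ} {L R : BT α n} :
    (node L R).leaves.Nodup ↔ L.leaves.Nodup ∧ R.leaves.Nodup ∧ ∀ a ∈ L.leaves, a ∉ R.leaves := by
  simp only [leaves, List.nodup_append]
  exact and_congr_right' <| and_congr_right' ⟨fun h a ha haR => h a ha a haR rfl,
    fun h a ha b hb hab => h a ha (hab ▸ hb)⟩

end BT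

theorem leaves_ordTree (k s : ℕ) : (ordTree k s).leaves = List.range' s (2 ^ k) := by
  induction k generalizing s with
  | zero => rfl
  | succ k ih =>
    rw [show (ordTree (k + 1) s).leaves = (ordTree k s).leaves ++ (ordTree k (s + 2 ^ k)).leaves
      from rfl, ih, ih, pow_succ, mul_two, ← List.range'_append, one_mul]

theorem leaves_map_ordTree {α : Type} (f : ℕ → α) (k s : ℕ) :
    ((ordTree k s).map f).leaves = (List.range' s (2 ^ k)).map f := by
  rw [BT.leaves_map, leaves_ordTree]

theorem nodup_leaves_map_ordTree {α : Type} {f : ℕ → α} {k s : ℕ}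
    (hf : Set.InjOn f (Set.Ico s (s + 2 ^ k))) : ((ordTree k s).map f).leaves.Nodup := by
  rw [leaves_map_ordTree]
  refine List.Nodup.map_on (fun x hx y hy hxy => hf ?_ ?_ hxy) List.nodup_range'
  · simpa [List.mem_range'_1] using hx
  · simpa [List.mem_range'_1] using hy

theorem isDraw_of_nodup {n : ℕ} {t : BT (Fin (2 ^ n)) n} (ht : t.leaves.Nodup) : IsDraw t := by
  have huniv : t.leaves.toFinset = univ := eq_univ_of_card _ <| by
    rw [List.toFinset_card_of_nodup ht, t.length_leaves, Fintype.card_fin]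
  exact fun i => List.count_eq_one_of_mem ht (List.mem_toFinset.1 (huniv ▸ mem_univ i))

section WinningDistribution

variable {N : ℕ} {M : Fin N → Fin N → ℝ} {n : ℕ}

theorem wd_eq_zero_of_not_mem {t : BT (Fin N) n} {i : Fin N} (hi : i ∉ t.leaves) :
    wd M t i = 0 := by
  induction t with
  | leaf a =>
    simp only [BT.leaves, List.mem_singleton] at hi
    simp [wd, hi]
  | node L R ihL ihR =>
    simp only [BT.leaves, List.mem_append, not_or] at hi
    simp [wd, ihL hi.1, ihR hi.2]

theorem wd_node_of_not_mem {L R : BT (Fin N) n} {z : Fin N} (hz : z ∉ R.leaves) :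
    wd M (.node L R) z = wd M L z * ∑ j, wd M R j * M z j := by
  simp [wd, wd_eq_zero_of_not_mem hz]

theorem wd_mul_wd_mul_eq_zero {A B : BT (Fin N) n} {i j : Fin N}
    (h : i ∈ A.leaves → j ∈ B.leaves → M i j = 0) : wd M A i * wd M B j * M i j = 0 := by
  by_cases hi : i ∈ A.leaves
  · by_cases hj : j ∈ B.leaves
    · rw [h hi hj, mul_zero]
    · rw [wd_eq_zero_of_not_mem hj, mul_zero, zero_mul]
  · rw [wd_eq_zero_of_not_mem hi, zero_mul, zero_mul]

theorem mul_nonneg_of_apply_eq_zero (hM : IsCompMatrix M) {w : Fin N → ℝ} (hw : ∀ j, 0 ≤ w j)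
    {z : Fin N} (hz : w z = 0) (j : Fin N) : 0 ≤ w j * M z j := by
  rcases eq_or_ne j z with rfl | hj
  · simp [hz]
  · exact mul_nonneg (hw j) (hM z j hj.symm).1

theorem wd_nonneg (hM : IsCompMatrix M) {t : BT (Fin N) n} (ht : t.leaves.Nodup) (i : Fin N) :
    0 ≤ wd M t i := by
  induction t generalizing i with
  | leaf a => unfold wd; split_ifs <;> norm_num
  | node L R ihL ihR =>
    obtain ⟨hL, hR, hLR⟩ := BT.nodup_node_iff.1 ht
    have hzero : wd M L i = 0 ∨ wd M R i = 0 := by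
      by_cases hi : i ∈ L.leaves
      · exact .inr (wd_eq_zero_of_not_mem (hLR i hi))
      · exact .inl (wd_eq_zero_of_not_mem hi)
    have hterm : ∀ w₁ w₂ : Fin N → ℝ, (∀ j, 0 ≤ w₁ j) → (∀ j, 0 ≤ w₂ j) → w₁ i = 0 ∨ w₂ i = 0 →
        0 ≤ w₁ i * ∑ j, w₂ j * M i j := by
      rintro w₁ w₂ h₁ h₂ (h | h)
      · simp [h]
      · exact mul_nonneg (h₁ i) (sum_nonneg fun j _ => mul_nonneg_of_apply_eq_zero hM h₂ h j)
    exact add_nonneg (hterm _ _ (ihL hL) (ihR hR) hzero) (hterm _ _ (ihR hR) (ihL hL) hzero.symm)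

theorem wd_mul_wd_mul_add (hM : IsCompMatrix M) {L R : BT (Fin N) n}
    (h : (BT.node L R).leaves.Nodup) (i j : Fin N) :
    wd M L i * wd M R j * (M i j + M j i) = wd M L i * wd M R j := by
  by_cases hi : i ∈ L.leaves
  · by_cases hj : j ∈ R.leaves
    · have hij : i ≠ j := fun e => BT.nodup_node_iff.1 h |>.2.2 i hi (e ▸ hj)
      rw [(hM i j hij).2.2, mul_one]
    · rw [wd_eq_zero_of_not_mem hj, mul_zero, zero_mul]
  · rw [wd_eq_zero_of_not_mem hi, zero_mul, zero_mul]

/-- A player of `S` wins the draw exactly when players of `S` win both halves, since none of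
them can beat an outsider from the other half. -/
theorem sum_wd_node (hM : IsCompMatrix M) {L R : BT (Fin N) n}
    (h : (BT.node L R).leaves.Nodup) (S : Finset (Fin N))
    (hLR : ∀ i ∈ L.leaves, ∀ j ∈ R.leaves, i ∈ S → j ∉ S → M i j = 0)
    (hRL : ∀ i ∈ R.leaves, ∀ j ∈ L.leaves, i ∈ S → j ∉ S → M i j = 0) :
    ∑ i ∈ S, wd M (.node L R) i = (∑ i ∈ S, wd M L i) * ∑ i ∈ S, wd M R i := by
  have hcross : ∀ i ∈ S, ∀ j ∉ S,
      wd M L i * wd M R j * M i j + wd M R i * wd M L j * M i j = 0 := fun i hi j hj => by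
    rw [wd_mul_wd_mul_eq_zero fun hi' hj' => hLR i hi' j hj' hi hj,
      wd_mul_wd_mul_eq_zero fun hi' hj' => hRL i hi' j hj' hi hj, add_zero]
  calc ∑ i ∈ S, wd M (.node L R) i
      = ∑ i ∈ S, ∑ j, (wd M L i * wd M R j * M i j + wd M R i * wd M L j * M i j) := by
        simp only [wd, mul_sum, ← sum_add_distrib, mul_assoc]
    _ = ∑ i ∈ S, ∑ j ∈ S, (wd M L i * wd M R j * M i j + wd M R i * wd M L j * M i j) :=
        sum_congr rfl fun i hi =>
          (sum_subset (subset_univ S) fun j _ hj => hcross i hi j hj).symm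
    _ = ∑ i ∈ S, ∑ j ∈ S, wd M L i * wd M R j * (M i j + M j i) := by
        simp only [sum_add_distrib, mul_add]
        rw [sum_comm (f := fun i j => wd M R i * wd M L j * M i j)]
        simp only [mul_comm (wd M R _)]
    _ = (∑ i ∈ S, wd M L i) * ∑ i ∈ S, wd M R i := by
        simp only [wd_mul_wd_mul_add hM h, sum_mul_sum]

theorem sum_wd_eq_one (hM : IsCompMatrix M) {t : BT (Fin N) n} (ht : t.leaves.Nodup) :
    ∑ i, wd M t i = 1 := by
  induction t with
  | leaf a => simp [wd]
  | node L R ihL ihR =>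
    obtain ⟨hL, hR, -⟩ := BT.nodup_node_iff.1 ht
    rw [sum_wd_node hM ht univ (by simp) (by simp), ihL hL, ihR hR, one_mul]

theorem wd_le_one (hM : IsCompMatrix M) {t : BT (Fin N) n} (ht : t.leaves.Nodup) (i : Fin N) :
    wd M t i ≤ 1 :=
  (single_le_sum (fun j _ => wd_nonneg hM ht j) (mem_univ i)).trans_eq (sum_wd_eq_one hM ht)

theorem le_sum_wd_mul (hM : IsCompMatrix M) {t : BT (Fin N) n} (ht : t.leaves.Nodup)
    {z : Fin N} {c : ℝ} (hc : ∀ j ∈ t.leaves, c ≤ M z j) : c ≤ ∑ j, wd M t j * M z j := by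
  calc c = ∑ j, wd M t j * c := by rw [← sum_mul, sum_wd_eq_one hM ht, one_mul]
    _ ≤ ∑ j, wd M t j * M z j := sum_le_sum fun j _ => by
        by_cases hj : j ∈ t.leaves
        · exact mul_le_mul_of_nonneg_left (hc j hj) (wd_nonneg hM ht j)
        · simp [wd_eq_zero_of_not_mem hj]

theorem wd_mul_wd_mul_le_wd_node (hM : IsCompMatrix M) {L R : BT (Fin N) n}
    (h : (BT.node L R).leaves.Nodup) {z : Fin N} (hz : z ∈ L.leaves) (w : Fin N) :
    wd M L z * (wd M R w * M z w) ≤ wd M (.node L R) z := by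
  obtain ⟨hL, hR, hLR⟩ := BT.nodup_node_iff.1 h
  have hzR := hLR z hz
  rw [wd_node_of_not_mem hzR]
  refine mul_le_mul_of_nonneg_left ?_ (wd_nonneg hM hL z)
  exact single_le_sum (fun j _ => mul_nonneg_of_apply_eq_zero hM (wd_nonneg hM hR)
    (wd_eq_zero_of_not_mem hzR) j) (mem_univ w)

theorem wd_node_comm (L R : BT (Fin N) n) : wd M (.node L R) = wd M (.node R L) := by
  funext i
  simp only [wd, add_comm]

theorem wd_mul_le_wd_node (hM : IsCompMatrix M) {L R : BT (Fin N) n}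
    (h : (BT.node L R).leaves.Nodup) {z : Fin N} (hz : z ∈ L.leaves) {c : ℝ}
    (hc : ∀ j ∈ R.leaves, c ≤ M z j) : wd M L z * c ≤ wd M (.node L R) z := by
  obtain ⟨hL, hR, hLR⟩ := BT.nodup_node_iff.1 h
  rw [wd_node_of_not_mem (hLR z hz)]
  exact mul_le_mul_of_nonneg_left (le_sum_wd_mul hM hR hc) (wd_nonneg hM hL z)

theorem pow_le_wd (hM : IsCompMatrix M) {c : ℝ} (hc : 0 ≤ c) {t : BT (Fin N) n}
    (ht : t.leaves.Nodup) {z : Fin N} (hz : z ∈ t.leaves)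
    (hbeat : ∀ j ∈ t.leaves, j ≠ z → c ≤ M z j) : c ^ n ≤ wd M t z := by
  induction t with
  | leaf a =>
    simp only [BT.leaves, List.mem_singleton] at hz
    simp [wd, hz]
  | @node k L R ihL ihR =>
    obtain ⟨hL, hR, hLR⟩ := BT.nodup_node_iff.1 ht
    have hRL : ∀ a ∈ R.leaves, a ∉ L.leaves := fun a haR haL => hLR a haL haR
    have hbeatL : ∀ j ∈ L.leaves, j ≠ z → c ≤ M z j := fun j hj => hbeat j (by simp [BT.leaves, hj])
    have hbeatR : ∀ j ∈ R.leaves, j ≠ z → c ≤ M z j := fun j hj => hbeat j (by simp [BT.leaves, hj])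
    simp only [BT.leaves, List.mem_append] at hz
    rw [pow_succ]
    rcases hz with hzL | hzR
    · exact (mul_le_mul_of_nonneg_right (ihL hL hzL hbeatL) hc).trans <| wd_mul_le_wd_node hM ht hzL
        fun j hj => hbeatR j hj fun e => hLR z hzL (e ▸ hj)
    · rw [wd_node_comm]
      exact (mul_le_mul_of_nonneg_right (ihR hR hzR hbeatR) hc).trans <|
        wd_mul_le_wd_node hM (BT.nodup_node_iff.2 ⟨hR, hL, hRL⟩) hzR
          fun j hj => hbeatL j hj fun e => hRL z hzR (e ▸ hj)

end WinningDistribution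

section Robustness

variable {N n : ℕ} {P P' : Fin N → Fin N → ℝ} {ε : ℝ}

theorem wpe_le_wd {t : BT (Fin N) n} (ht : t.leaves.Nodup) (hP' : P' ∈ perturbs P ε) (i : Fin N) :
    wpe i P ε t ≤ wd P' t i :=
  csInf_le ⟨0, by rintro _ ⟨Q, hQ, rfl⟩; exact wd_nonneg hQ.1 ht i⟩ ⟨P', hP', rfl⟩

theorem le_wpe (hP : IsCompMatrix P) (hε : 0 ≤ ε) {t : BT (Fin N) n} {i : Fin N} {c : ℝ}
    (h : ∀ P' ∈ perturbs P ε, c ≤ wd P' t i) : c ≤ wpe i P ε t :=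
  le_csInf ⟨_, P, ⟨hP, fun i j _ => by simpa using hε⟩, rfl⟩ <| by
    rintro _ ⟨P', hP', rfl⟩
    exact h P' hP'

theorem one_sub_le_of_mem_perturbs (hP' : P' ∈ perturbs P ε) {i j : Fin N} (hij : i ≠ j)
    (h : P i j = 1) : 1 - ε ≤ P' i j := by
  have := hP'.2 i j hij
  rw [h, abs_le] at this
  linarith [this.1]

end Robustness

/-- `ε` is the probability of an upset in the first-round matches `2k` vs `2k + 1` of the
identity draw. -/
noncomputable def parityMatrix (N : ℕ) (ε : ℝ) : Fin N → Fin N → ℝ := fun i j =>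
  if (i : ℕ) % 2 = (j : ℕ) % 2 then (if (i : ℕ) < j then 1 else 0)
  else if (i : ℕ) % 2 = 0 then (if (j : ℕ) = i + 1 then 1 - ε else 0)
  else if (i : ℕ) = j + 1 then ε else 1

section ParityMatrix

variable {N : ℕ} {ε : ℝ} {i j : Fin N}

theorem parityMatrix_of_mod_eq (h : (i : ℕ) % 2 = (j : ℕ) % 2) (hij : (i : ℕ) < j) :
    parityMatrix N ε i j = 1 := by
  simp [parityMatrix, h, hij]

theorem parityMatrix_of_eq_succ (hi : (i : ℕ) % 2 = 0) (hj : (j : ℕ) = i + 1) :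
    parityMatrix N ε i j = 1 - ε := by
  simp only [parityMatrix]
  rw [if_neg (by omega), if_pos hi, if_pos hj]

theorem parityMatrix_even_odd (hi : (i : ℕ) % 2 = 0) (hj : (j : ℕ) % 2 = 1)
    (hij : (j : ℕ) ≠ i + 1) : parityMatrix N ε i j = 0 := by
  simp only [parityMatrix]
  rw [if_neg (by omega), if_pos hi, if_neg hij]

theorem isCompMatrix_parityMatrix (h0 : 0 ≤ ε) (h1 : ε ≤ 1) : IsCompMatrix (parityMatrix N ε) := by
  intro i j hij
  have hval : (i : ℕ) ≠ j := Fin.val_ne_of_ne hij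
  simp only [parityMatrix]
  refine ⟨?_, ?_, ?_⟩ <;> split_ifs <;> first | linarith | omega

theorem isDet_parityMatrix : IsDet (parityMatrix N 0) := by
  intro i j _
  simp only [parityMatrix]
  split_ifs <;> norm_num

theorem parityMatrix_mem_perturbs (h0 : 0 ≤ ε) (h1 : ε ≤ 1) :
    parityMatrix N ε ∈ perturbs (parityMatrix N 0) ε := by
  refine ⟨isCompMatrix_parityMatrix h0 h1, fun i j _ => ?_⟩
  simp only [parityMatrix]
  split_ifs <;> rw [abs_le] <;> constructor <;> linarith

end ParityMatrix

def idBlock (n k s : ℕ) : BT (Fin (2 ^ n)) k := (ordTree k s).map (Fin.ofNat (2 ^ n))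

theorem val_ofNat_of_lt {N x : ℕ} [NeZero N] (h : x < N) : (Fin.ofNat N x : ℕ) = x :=
  Nat.mod_eq_of_lt h

section IdentityDraw

variable {n k s : ℕ} {ε : ℝ}

theorem idBlock_succ (n k s : ℕ) :
    idBlock n (k + 1) s = .node (idBlock n k s) (idBlock n k (s + 2 ^ k)) := rfl

theorem mem_idBlock (h : s + 2 ^ k ≤ 2 ^ n) {i : Fin (2 ^ n)} :
    i ∈ (idBlock n k s).leaves ↔ s ≤ i ∧ (i : ℕ) < s + 2 ^ k := by
  simp only [idBlock, leaves_map_ordTree, List.mem_map, List.mem_range'_1]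
  constructor
  · rintro ⟨x, hx, rfl⟩
    rwa [val_ofNat_of_lt (by omega)]
  · exact fun hi => ⟨i, hi, Fin.ext (by simp)⟩

theorem nodup_idBlock (h : s + 2 ^ k ≤ 2 ^ n) : (idBlock n k s).leaves.Nodup :=
  nodup_leaves_map_ordTree fun x hx y hy hxy => by
    simp only [Set.mem_Ico] at hx hy
    simpa only [val_ofNat_of_lt (show x < 2 ^ n by omega),
      val_ofNat_of_lt (show y < 2 ^ n by omega)] using congrArg Fin.val hxy

theorem wd_idBlock (hs : 2 ^ k ∣ s) (h : s + 2 ^ k ≤ 2 ^ n) :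
    wd (parityMatrix (2 ^ n) 0) (idBlock n k s) (Fin.ofNat _ s) = 1 := by
  induction k generalizing s with
  | zero => simp [idBlock, ordTree, BT.map, wd]
  | succ k ih =>
    have hM := isCompMatrix_parityMatrix (N := 2 ^ n) le_rfl zero_le_one
    have hk : 2 ^ k ∣ s := (pow_dvd_pow 2 k.le_succ).trans hs
    have hs2 : s % 2 = 0 := Nat.mod_eq_zero_of_dvd ((dvd_pow_self 2 k.succ_ne_zero).trans hs)
    rw [pow_succ, mul_two] at h
    have ha := val_ofNat_of_lt (show s < 2 ^ n by omega)
    have hb := val_ofNat_of_lt (show s + 2 ^ k < 2 ^ n by omega)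
    have hwin : parityMatrix (2 ^ n) 0 (Fin.ofNat _ s) (Fin.ofNat _ (s + 2 ^ k)) = 1 := by
      rcases k.eq_zero_or_pos with rfl | hk0
      · rw [parityMatrix_of_eq_succ (by omega) (by omega), sub_zero]
      · have : 2 ^ k % 2 = 0 := Nat.mod_eq_zero_of_dvd (dvd_pow_self 2 hk0.ne')
        exact parityMatrix_of_mod_eq (by omega) (by omega)
    have hnd : (idBlock n (k + 1) s).leaves.Nodup := nodup_idBlock (by omega)
    have hsL : Fin.ofNat (2 ^ n) s ∈ (idBlock n k s).leaves := by
      rw [mem_idBlock (by omega), ha]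
      omega
    rw [idBlock_succ] at hnd ⊢
    have hlow := wd_mul_wd_mul_le_wd_node hM hnd hsL (Fin.ofNat _ (s + 2 ^ k))
    rw [ih hk (by omega), ih (dvd_add hk dvd_rfl) (by omega), hwin, one_mul, one_mul] at hlow
    exact le_antisymm (wd_le_one hM hnd _) hlow

/-- A player of even number wins a block only if every first-round match in it was won by its
even player: the odd winners of upsets beat all even players afterwards. -/
theorem sum_even_wd_idBlock (h0 : 0 ≤ ε) (h1 : ε ≤ 1) (hs : 2 ^ (k + 1) ∣ s)
    (h : s + 2 ^ (k + 1) ≤ 2 ^ n) :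
    ∑ i : Fin (2 ^ n) with i.val % 2 = 0, wd (parityMatrix (2 ^ n) ε) (idBlock n (k + 1) s) i
      = (1 - ε) ^ 2 ^ k := by
  have hM := isCompMatrix_parityMatrix (N := 2 ^ n) h0 h1
  have hs2 : s % 2 = 0 := Nat.mod_eq_zero_of_dvd ((dvd_pow_self 2 k.succ_ne_zero).trans hs)
  induction k generalizing s with
  | zero =>
    have ha := val_ofNat_of_lt (show s < 2 ^ n by omega)
    have hb := val_ofNat_of_lt (show s + 1 < 2 ^ n by omega)
    rw [sum_eq_single_of_mem (Fin.ofNat _ s)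
      (by simp only [mem_filter, mem_univ, ha, hs2, and_self])]
    · rw [idBlock_succ, wd_node_of_not_mem (by rw [mem_idBlock (by omega)]; omega),
        show idBlock n 0 s = .leaf (Fin.ofNat _ s) from rfl,
        show idBlock n 0 (s + 2 ^ 0) = .leaf (Fin.ofNat _ (s + 1)) from rfl]
      simp only [wd, if_true, one_mul, ite_mul, zero_mul, sum_ite_eq', mem_univ]
      rw [pow_zero, pow_one]
      exact parityMatrix_of_eq_succ (by omega) (by omega)
    · intro i hi his
      refine wd_eq_zero_of_not_mem fun hmem => his (Fin.ext ?_)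
      rw [mem_idBlock (by omega)] at hmem
      simp only [mem_filter, mem_univ, true_and] at hi
      omega
  | succ k ih =>
    have hk : 2 ^ (k + 1) ∣ s := (pow_dvd_pow 2 (k + 1).le_succ).trans hs
    have hp : 2 ^ (k + 1) % 2 = 0 := Nat.mod_eq_zero_of_dvd (dvd_pow_self 2 k.succ_ne_zero)
    rw [pow_succ 2 (k + 1), mul_two] at h
    have hnd : (idBlock n (k + 1 + 1) s).leaves.Nodup := nodup_idBlock (by omega)
    rw [idBlock_succ] at hnd ⊢
    rw [sum_wd_node hM hnd _ ?_ ?_, ih hk (by omega) hs2,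
      ih (dvd_add hk dvd_rfl) (by omega) (by omega), ← pow_add, ← mul_two, ← pow_succ]
    all_goals
      intro i hi j hj hie hjo
      rw [mem_idBlock (by omega)] at hi hj
      simp only [mem_filter, mem_univ, true_and] at hie hjo
      exact parityMatrix_even_odd hie (by omega) (by omega)

theorem wpe_idDraw_le (m : ℕ) (h0 : 0 ≤ ε) (h1 : ε ≤ 1) :
    wpe ⟨0, by positivity⟩ (parityMatrix (2 ^ (m + 1)) 0) ε (idDraw (m + 1)) ≤ (1 - ε) ^ 2 ^ m := by
  have hnd : (idDraw (m + 1)).leaves.Nodup := nodup_idBlock (by simp)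
  calc _ ≤ wd (parityMatrix _ ε) (idDraw (m + 1)) ⟨0, by positivity⟩ :=
        wpe_le_wd hnd (parityMatrix_mem_perturbs h0 h1) _
    _ ≤ ∑ i : Fin (2 ^ (m + 1)) with i.val % 2 = 0, wd (parityMatrix _ ε) (idDraw (m + 1)) i :=
        single_le_sum (fun i _ => wd_nonneg (isCompMatrix_parityMatrix h0 h1) hnd i) (by simp)
    _ = (1 - ε) ^ 2 ^ m := sum_even_wd_idBlock h0 h1 (by simp) (by simp)

end IdentityDraw

def parityTree (m r : ℕ) : BT (Fin (2 ^ (m + 1))) m :=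
  (ordTree m 0).map fun k => Fin.ofNat _ (2 * k + r)

def evenOddDraw (m : ℕ) : BT (Fin (2 ^ (m + 1))) (m + 1) :=
  .node (parityTree m 0) (parityTree m 1)

section EvenOddDraw

variable {m r : ℕ}

theorem mem_parityTree (hr : r < 2) {i : Fin (2 ^ (m + 1))} :
    i ∈ (parityTree m r).leaves ↔ (i : ℕ) % 2 = r := by
  have hm : 2 ^ (m + 1) = 2 * 2 ^ m := pow_succ' 2 m
  simp only [parityTree, leaves_map_ordTree, List.mem_map, List.mem_range'_1]
  constructor
  · rintro ⟨k, hk, rfl⟩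
    rw [val_ofNat_of_lt (by omega)]
    omega
  · intro hi
    have := i.isLt
    refine ⟨i / 2, by omega, Fin.ext ?_⟩
    rw [val_ofNat_of_lt (by omega)]
    omega

theorem nodup_parityTree (hr : r < 2) : (parityTree m r).leaves.Nodup :=
  nodup_leaves_map_ordTree fun x hx y hy hxy => by
    have hm : 2 ^ (m + 1) = 2 * 2 ^ m := pow_succ' 2 m
    simp only [Set.mem_Ico] at hx hy
    have := congrArg Fin.val hxy
    rw [val_ofNat_of_lt (by omega), val_ofNat_of_lt (by omega)] at this
    omega

theorem nodup_evenOddDraw (m : ℕ) : (evenOddDraw m).leaves.Nodup :=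
  BT.nodup_node_iff.2 ⟨nodup_parityTree (by norm_num), nodup_parityTree (by norm_num),
    fun i hi hi' => by
      rw [mem_parityTree (by norm_num)] at hi hi'
      omega⟩

theorem pow_le_wd_evenOddDraw {M : Fin (2 ^ (m + 1)) → Fin (2 ^ (m + 1)) → ℝ}
    (hM : IsCompMatrix M) {c : ℝ} (hc : 0 ≤ c)
    (hMc : ∀ i j, i ≠ j → parityMatrix _ 0 i j = 1 → c ≤ M i j) :
    c ^ (2 * m + 1) ≤ wd M (evenOddDraw m) ⟨0, by positivity⟩ := by
  have h2 : 2 ≤ 2 ^ (m + 1) := Nat.le_self_pow m.succ_ne_zero 2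
  have hchampion : ∀ r (hr : r < 2), c ^ m ≤ wd M (parityTree m r) ⟨r, by omega⟩ := fun r hr =>
    pow_le_wd hM hc (nodup_parityTree hr) ((mem_parityTree hr).2 (Nat.mod_eq_of_lt hr))
      fun j hj hjr => hMc _ _ hjr.symm <| by
        rw [mem_parityTree hr] at hj
        have : (j : ℕ) ≠ r := fun e => hjr (Fin.ext e)
        exact parityMatrix_of_mod_eq (by dsimp only; omega) (by dsimp only; omega)
  have h01 : c ≤ M ⟨0, by positivity⟩ ⟨1, by omega⟩ :=
    hMc _ _ (by simp [Fin.ext_iff]) (by rw [parityMatrix_of_eq_succ rfl rfl, sub_zero])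
  have hw0 := wd_nonneg hM (nodup_parityTree (m := m) (r := 0) (by norm_num)) ⟨0, by omega⟩
  have hw1 := wd_nonneg hM (nodup_parityTree (m := m) (r := 1) (by norm_num)) ⟨1, by omega⟩
  calc c ^ (2 * m + 1) = c ^ m * (c ^ m * c) := by ring
    _ ≤ wd M (parityTree m 0) ⟨0, by positivity⟩ *
        (wd M (parityTree m 1) ⟨1, by omega⟩ * M ⟨0, by positivity⟩ ⟨1, by omega⟩) :=
      mul_le_mul (hchampion 0 (by norm_num))
        (mul_le_mul (hchampion 1 (by norm_num)) h01 hc hw1) (by positivity) hw0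
    _ ≤ wd M (evenOddDraw m) ⟨0, by positivity⟩ :=
      wd_mul_wd_mul_le_wd_node hM (nodup_evenOddDraw m) ((mem_parityTree (by norm_num)).2 rfl) _

end EvenOddDraw

theorem one_sub_pow_le {x : ℝ} (hx0 : 0 ≤ x) (hx1 : x ≤ 1) (p : ℕ) :
    (1 - x) ^ p ≤ 1 - p * x + p ^ 2 * x ^ 2 := by
  induction p with
  | zero => simp
  | succ p ih =>
    have hp : (0 : ℝ) ≤ p := p.cast_nonneg
    calc (1 - x) ^ (p + 1) = (1 - x) ^ p * (1 - x) := pow_succ _ _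
      _ ≤ (1 - p * x + p ^ 2 * x ^ 2) * (1 - x) := by gcongr
      _ ≤ 1 - (p + 1 : ℕ) * x + (p + 1 : ℕ) ^ 2 * x ^ 2 := by
        push_cast
        nlinarith [mul_nonneg (mul_nonneg hp hp) (pow_nonneg hx0 3), mul_nonneg hp (sq_nonneg x),
          sq_nonneg x]

theorem one_sub_mul_lt_one_sub_pow {x : ℝ} (hx0 : 0 < x) (hx1 : x < 1) {p : ℕ} (hp : 2 ≤ p) :
    1 - p * x < (1 - x) ^ p := by
  have := one_add_mul_self_lt_rpow_one_add (s := -x) (by linarith) (by linarith)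
    (p := p) (by exact_mod_cast hp)
  rwa [Real.rpow_natCast, ← sub_eq_add_neg, mul_neg, ← sub_eq_add_neg] at this

/-- for every `n ≥ 2` there are a deterministic comparison matrix `P`
on `N = 2^n` players and draws `σ, σ'` in which player 1 (index 0) surely wins, such
that `wp_ε(1,P,σ) ≤ 1 - (N/2)ε + ε² Q(ε)` for some polynomial `Q`, while
`wp_ε(1,P,σ') > 1 - (2n-1)ε`, for all `ε ∈ (0,1)`. -/
theorem robust_and_nonrobust_optimal_draws (n : ℕ) (hn : 2 ≤ n) :
    ∃ (P : Fin (2 ^ n) → Fin (2 ^ n) → ℝ) (σ σ' : BT (Fin (2 ^ n)) n),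
      IsCompMatrix P ∧ IsDet P ∧ IsDraw σ ∧ IsDraw σ' ∧
      wd P σ ⟨0, by positivity⟩ = 1 ∧ wd P σ' ⟨0, by positivity⟩ = 1 ∧
      (∃ Q : Polynomial ℝ, ∀ ε ∈ Set.Ioo (0 : ℝ) 1,
        wpe ⟨0, by positivity⟩ P ε σ ≤
          1 - ((2 : ℝ) ^ n / 2) * ε + ε ^ 2 * Q.eval ε) ∧
      (∀ ε ∈ Set.Ioo (0 : ℝ) 1,
        wpe ⟨0, by positivity⟩ P ε σ' > 1 - (2 * (n : ℝ) - 1) * ε) := by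
  obtain ⟨m, rfl⟩ : ∃ m, n = m + 1 := ⟨n - 1, by omega⟩
  have hP := isCompMatrix_parityMatrix (N := 2 ^ (m + 1)) le_rfl zero_le_one
  have hσ : (idDraw (m + 1)).leaves.Nodup := nodup_idBlock (by simp)
  refine ⟨parityMatrix _ 0, idDraw (m + 1), evenOddDraw m, hP, isDet_parityMatrix,
    isDraw_of_nodup hσ, isDraw_of_nodup (nodup_evenOddDraw m), wd_idBlock (by simp) (by simp),
    le_antisymm (wd_le_one hP (nodup_evenOddDraw m) _)
      (by simpa using pow_le_wd_evenOddDraw hP zero_le_one fun i j _ h => h.ge),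
    ⟨.C ((2 ^ m : ℝ) ^ 2), fun ε ⟨h0, h1⟩ => ?_⟩, fun ε ⟨h0, h1⟩ => ?_⟩
  · calc _ ≤ (1 - ε) ^ 2 ^ m := wpe_idDraw_le m h0.le h1.le
      _ ≤ 1 - (2 ^ m : ℕ) * ε + (2 ^ m : ℕ) ^ 2 * ε ^ 2 := one_sub_pow_le h0.le h1.le _
      _ = _ := by rw [Polynomial.eval_C]; push_cast; ring
  · calc 1 - (2 * ((m + 1 : ℕ) : ℝ) - 1) * ε = 1 - (2 * m + 1 : ℕ) * ε := by push_cast; ring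
      _ < (1 - ε) ^ (2 * m + 1) := one_sub_mul_lt_one_sub_pow h0 h1 (by omega)
      _ ≤ _ := le_wpe hP h0.le fun P' hP' => pow_le_wd_evenOddDraw hP'.1 (by linarith)
          fun i j hij h => one_sub_le_of_mem_perturbs hP' hij h
end

section
/- Let p ∈ (1/2, 1), n ≥ 1, and 0 ≤ k ≤ 2^n. Suppose an ordered perfect binary tree t of depth n with leaf labels in {0,1} and exactly k leaves labeled 1 maximizes B_p among all such trees with exactly k ones. Then the number of 1-labeled leaves in the left subtree of the root and the number in the right subtree differ by at most 1. -/
/-!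
A 0/1 tree is improved by moving ones from the heavier subtree of the root to the lighter one,
so the tree `balTree n k`, which splits its `k` ones as evenly as possible at every node, is
optimal; write `M k = balancedBp p n k` for its value. The heart of the matter is a discrete
concavity of `M` in the geometry of `f_p`: writing `f_p x y = p x + φ(x) y` with
`φ(x) = p + (1 - 2p) x`, the identity `φ (f_p x y) = φ x φ y + p (1 - p)` shows by induction on
`n` that the marginal gains `(M (k + 1) - M k) / φ (M (k + 1))` strictly decrease in `k` when
`p > 1/2`. Hence moving a one from a side with `a + 1` ones to a side with `b < a` ones strictly
increases `f_p (M ·) (M ·)`, which forbids an imbalance of two or more in an optimal tree.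
-/

section Fp

variable {p x x' y y' : ℝ}

def fpSlope (p x : ℝ) : ℝ := p + (1 - 2 * p) * x

lemma fp_comm (p x y : ℝ) : fp p x y = fp p y x := by
  unfold fp; ring

lemma fp_sub_fp_left (p x x' y : ℝ) : fp p x' y - fp p x y = (x' - x) * fpSlope p y := by
  unfold fp fpSlope; ring

lemma fp_sub_fp_right (p x y y' : ℝ) : fp p x y' - fp p x y = (y' - y) * fpSlope p x := by
  unfold fp fpSlope; ring

lemma fp_sub_fp_cross (p x x' y y' : ℝ) :
    fp p x' y - fp p x y' = (x' - x) * fpSlope p y' - (y' - y) * fpSlope p x' := by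
  unfold fp fpSlope; ring

lemma fpSlope_fp (p x y : ℝ) :
    fpSlope p (fp p x y) = fpSlope p x * fpSlope p y + p * (1 - p) := by
  unfold fp fpSlope; ring

lemma fpSlope_nonneg (hp : p ∈ Set.Icc 0 1) (hx : x ∈ Set.Icc 0 1) : 0 ≤ fpSlope p x := by
  unfold fpSlope
  nlinarith [mul_nonneg hp.1 (sub_nonneg.2 hx.2), mul_nonneg (sub_nonneg.2 hp.2) hx.1]

lemma fpSlope_pos (hp : p ∈ Set.Ioo 0 1) (hx : x ∈ Set.Icc 0 1) : 0 < fpSlope p x := by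
  unfold fpSlope
  rcases le_total p (1 / 2) with h | h
  · nlinarith [mul_nonneg (sub_nonneg.2 h) hx.1, hp.1]
  · nlinarith [mul_nonneg (sub_nonneg.2 h) (sub_nonneg.2 hx.2), hp.2]

lemma fpSlope_lt_fpSlope (hp : 1 / 2 < p) (hxy : x < y) : fpSlope p y < fpSlope p x := by
  unfold fpSlope; nlinarith

lemma fp_mem_Icc (hp : p ∈ Set.Icc 0 1) (hx : x ∈ Set.Icc 0 1) (hy : y ∈ Set.Icc 0 1) :
    fp p x y ∈ Set.Icc 0 1 := by
  have hφ := fpSlope_nonneg hp hx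
  have hfp : fp p x y = p * x + y * fpSlope p x := by unfold fp fpSlope; ring
  have hfp' : 1 - fp p x y = (1 - p) * (1 - x) + (1 - y) * fpSlope p x := by
    unfold fp fpSlope; ring
  constructor
  · rw [hfp]
    exact add_nonneg (mul_nonneg hp.1 hx.1) (mul_nonneg hy.1 hφ)
  · rw [← sub_nonneg, hfp']
    exact add_nonneg (mul_nonneg (sub_nonneg.2 hp.2) (sub_nonneg.2 hx.2))
      (mul_nonneg (sub_nonneg.2 hy.2) hφ)

lemma fp_le_fp (hp : p ∈ Set.Icc 0 1) (hx : x ∈ Set.Icc 0 1) (hy' : y' ∈ Set.Icc 0 1)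
    (hxx' : x ≤ x') (hyy' : y ≤ y') : fp p x y ≤ fp p x' y' := by
  have h1 := fp_sub_fp_left p x x' y'
  have h2 := fp_sub_fp_right p x y y'
  nlinarith [mul_nonneg (sub_nonneg.2 hxx') (fpSlope_nonneg hp hy'),
    mul_nonneg (sub_nonneg.2 hyy') (fpSlope_nonneg hp hx)]

end Fp

lemma BT.length_leaves_s9 {α : Type} : ∀ {n : ℕ} (t : BT α n), t.leaves.length = 2 ^ n
  | _, .leaf _ => rfl
  | _, .node L R => by
    rw [BT.leaves, List.length_append, L.length_leaves_s9, R.length_leaves_s9, pow_succ, mul_two]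

lemma ones_node {n : ℕ} (L R : BT ℝ n) : ones (.node L R) = ones L + ones R :=
  List.count_append ..

lemma ones_le {n : ℕ} (t : BT ℝ n) : ones t ≤ 2 ^ n :=
  t.length_leaves_s9 ▸ List.count_le_length

lemma zeroOne_node {n : ℕ} {L R : BT ℝ n} :
    ZeroOne (.node L R) ↔ ZeroOne L ∧ ZeroOne R := by
  simp only [ZeroOne, BT.leaves, List.mem_append, or_imp, forall_and]

lemma Bp_mem_Icc {p : ℝ} (hp : p ∈ Set.Icc 0 1) :
    ∀ {n : ℕ} {t : BT ℝ n}, ZeroOne t → Bp p t ∈ Set.Icc 0 1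
  | _, .leaf x, h => by
    rcases h x (List.mem_singleton_self x) with rfl | rfl <;> simp [Bp]
  | _, .node _ _, h =>
    fp_mem_Icc hp (Bp_mem_Icc hp (zeroOne_node.1 h).1) (Bp_mem_Icc hp (zeroOne_node.1 h).2)

noncomputable def balTree : (n : ℕ) → ℕ → BT ℝ n
  | 0, k => .leaf (if k = 0 then 0 else 1)
  | n + 1, k => .node (balTree n ((k + 1) / 2)) (balTree n (k / 2))

lemma zeroOne_balTree : ∀ (n k : ℕ), ZeroOne (balTree n k)
  | 0, k => by
    intro x hx
    simp only [balTree, BT.leaves, List.mem_singleton] at hx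
    split_ifs at hx <;> simp [hx]
  | n + 1, _ => zeroOne_node.2 ⟨zeroOne_balTree n _, zeroOne_balTree n _⟩

lemma ones_balTree : ∀ {n k : ℕ}, k ≤ 2 ^ n → ones (balTree n k) = k
  | 0, k, hk => by
    interval_cases k <;> simp [ones, balTree, BT.leaves]
  | n + 1, k, hk => by
    rw [balTree, ones_node, ones_balTree (by omega), ones_balTree (by omega)]
    omega

noncomputable def balancedBp (p : ℝ) (n k : ℕ) : ℝ := Bp p (balTree n k)

lemma balancedBp_mem_Icc {p : ℝ} (hp : p ∈ Set.Icc 0 1) (n k : ℕ) :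
    balancedBp p n k ∈ Set.Icc 0 1 :=
  Bp_mem_Icc hp (zeroOne_balTree n k)

lemma balancedBp_zero_lt_one (p : ℝ) : balancedBp p 0 0 < balancedBp p 0 1 := by
  simp [balancedBp, balTree, Bp]

lemma balancedBp_two_mul (p : ℝ) (n c : ℕ) :
    balancedBp p (n + 1) (2 * c) = fp p (balancedBp p n c) (balancedBp p n c) := by
  simp only [balancedBp, balTree, Bp]
  congr 3 <;> omega

lemma balancedBp_two_mul_add_one (p : ℝ) (n c : ℕ) :
    balancedBp p (n + 1) (2 * c + 1) = fp p (balancedBp p n (c + 1)) (balancedBp p n c) := by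
  simp only [balancedBp, balTree, Bp]
  congr 3 <;> omega

section BalancedBp

variable {p : ℝ}

lemma balancedBp_lt_succ (hp : p ∈ Set.Ioo 0 1) :
    ∀ {n k : ℕ}, k < 2 ^ n → balancedBp p n k < balancedBp p n (k + 1)
  | 0, k, hk => by
    obtain rfl : k = 0 := by simpa using hk
    exact balancedBp_zero_lt_one p
  | n + 1, k, hk => by
    have hM := balancedBp_mem_Icc (Set.Ioo_subset_Icc_self hp) n
    obtain ⟨c, rfl | rfl⟩ := Nat.even_or_odd' k
    · have huv := balancedBp_lt_succ hp (n := n) (k := c) (by omega)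
      rw [balancedBp_two_mul_add_one, balancedBp_two_mul, ← sub_pos, fp_sub_fp_left]
      exact mul_pos (sub_pos.2 huv) (fpSlope_pos hp (hM c))
    · have huv := balancedBp_lt_succ hp (n := n) (k := c) (by omega)
      rw [show 2 * c + 1 + 1 = 2 * (c + 1) by ring, balancedBp_two_mul,
        balancedBp_two_mul_add_one, ← sub_pos, fp_sub_fp_right]
      exact mul_pos (sub_pos.2 huv) (fpSlope_pos hp (hM (c + 1)))

lemma balancedBp_concave (hp : p ∈ Set.Ioo (1 / 2) 1) :
    ∀ {n k : ℕ}, k + 2 ≤ 2 ^ n →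
      (balancedBp p n (k + 2) - balancedBp p n (k + 1)) * fpSlope p (balancedBp p n (k + 1)) <
        (balancedBp p n (k + 1) - balancedBp p n k) * fpSlope p (balancedBp p n (k + 2))
  | 0, k, hk => by simp at hk
  | n + 1, k, hk => by
    have hp₀ : p ∈ Set.Ioo 0 1 := Set.Ioo_subset_Ioo_left (by norm_num) hp
    have hM := balancedBp_mem_Icc (Set.Ioo_subset_Icc_self hp₀) n
    have hr : 0 < p * (1 - p) := mul_pos hp₀.1 (sub_pos.2 hp.2)
    obtain ⟨c, rfl | rfl⟩ := Nat.even_or_odd' k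
    · have huv := balancedBp_lt_succ hp₀ (n := n) (k := c) (by omega)
      set u := balancedBp p n c
      set v := balancedBp p n (c + 1)
      have hφ : fpSlope p v < fpSlope p u := fpSlope_lt_fpSlope hp.1 huv
      rw [show 2 * c + 2 = 2 * (c + 1) by ring, balancedBp_two_mul, balancedBp_two_mul,
        balancedBp_two_mul_add_one, fp_sub_fp_right, fp_sub_fp_left, fpSlope_fp, fpSlope_fp]
      have := mul_pos (mul_pos (sub_pos.2 huv) hr) (sub_pos.2 hφ)
      linear_combination this
    · have huv := balancedBp_lt_succ hp₀ (n := n) (k := c) (by omega)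
      have hvw := balancedBp_lt_succ hp₀ (n := n) (k := c + 1) (by omega)
      have ih := balancedBp_concave hp (n := n) (k := c) (by omega)
      set u := balancedBp p n c
      set v := balancedBp p n (c + 1)
      set w := balancedBp p n (c + 2)
      have hφv := fpSlope_pos hp₀ (hM (c + 1))
      have hφ : fpSlope p w < fpSlope p v := fpSlope_lt_fpSlope hp.1 hvw
      have hgap : w - v < v - u := by nlinarith
      rw [show 2 * c + 1 + 2 = 2 * (c + 1) + 1 by ring, show 2 * c + 1 + 1 = 2 * (c + 1) by ring,
        balancedBp_two_mul, balancedBp_two_mul_add_one, balancedBp_two_mul_add_one,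
        fp_sub_fp_left, fp_sub_fp_right, fpSlope_fp, fpSlope_fp, show c + 1 + 1 = c + 2 from rfl]
      have key : (w - v) * (fpSlope p v * fpSlope p v + p * (1 - p)) <
          (v - u) * (fpSlope p w * fpSlope p v + p * (1 - p)) := by
        nlinarith [mul_lt_mul_of_pos_right ih hφv, mul_lt_mul_of_pos_right hgap hr]
      nlinarith [mul_lt_mul_of_pos_left key hφv]

noncomputable def marginalGain (p : ℝ) (n k : ℕ) : ℝ :=
  (balancedBp p n (k + 1) - balancedBp p n k) / fpSlope p (balancedBp p n (k + 1))

lemma marginalGain_strictAntiOn (hp : p ∈ Set.Ioo (1 / 2) 1) (n : ℕ) :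
    StrictAntiOn (marginalGain p n) (Set.Iic (2 ^ n - 1)) := by
  have hp₀ : p ∈ Set.Ioo 0 1 := Set.Ioo_subset_Ioo_left (by norm_num) hp
  have hφ (k : ℕ) := fpSlope_pos hp₀ (balancedBp_mem_Icc (Set.Ioo_subset_Icc_self hp₀) n k)
  refine strictAntiOn_Iic_of_succ_lt fun k hk => ?_
  rw [Order.succ_eq_add_one, marginalGain, marginalGain, div_lt_div_iff₀ (hφ _) (hφ _)]
  exact balancedBp_concave hp (by omega)

lemma fp_balancedBp_lt_of_lt (hp : p ∈ Set.Ioo (1 / 2) 1) {n a b : ℕ} (hba : b < a)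
    (ha : a < 2 ^ n) :
    fp p (balancedBp p n (a + 1)) (balancedBp p n b) <
      fp p (balancedBp p n a) (balancedBp p n (b + 1)) := by
  have hp₀ : p ∈ Set.Ioo 0 1 := Set.Ioo_subset_Ioo_left (by norm_num) hp
  have hφ (k : ℕ) := fpSlope_pos hp₀ (balancedBp_mem_Icc (Set.Ioo_subset_Icc_self hp₀) n k)
  have hgain := marginalGain_strictAntiOn hp n (by simp; omega) (by simp; omega) hba
  rw [marginalGain, marginalGain, div_lt_div_iff₀ (hφ _) (hφ _)] at hgain
  linarith [fp_sub_fp_cross p (balancedBp p n a) (balancedBp p n (a + 1)) (balancedBp p n b)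
    (balancedBp p n (b + 1))]

lemma fp_balancedBp_le (hp : p ∈ Set.Ioo (1 / 2) 1) {n a b : ℕ} (ha : a ≤ 2 ^ n)
    (hb : b ≤ 2 ^ n) :
    fp p (balancedBp p n a) (balancedBp p n b) ≤ balancedBp p (n + 1) (a + b) := by
  wlog hba : b ≤ a generalizing a b
  · rw [fp_comm, add_comm a]
    exact this hb ha (by omega)
  induction a using Nat.strong_induction_on generalizing b with
  | _ a ih =>
    rcases (by omega : a = b ∨ a = b + 1 ∨ b + 2 ≤ a) with rfl | rfl | hgap
    · rw [← two_mul, balancedBp_two_mul]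
    · rw [show b + 1 + b = 2 * b + 1 by ring, balancedBp_two_mul_add_one]
    · obtain ⟨a, rfl⟩ : ∃ a', a = a' + 1 := ⟨a - 1, by omega⟩
      calc fp p (balancedBp p n (a + 1)) (balancedBp p n b)
          ≤ fp p (balancedBp p n a) (balancedBp p n (b + 1)) :=
            (fp_balancedBp_lt_of_lt hp (by omega) (by omega)).le
        _ ≤ balancedBp p (n + 1) (a + (b + 1)) := ih a (by omega) (by omega) (by omega) (by omega)
        _ = balancedBp p (n + 1) (a + 1 + b) := by rw [add_right_comm, add_assoc]

end BalancedBp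

lemma Bp_le_balancedBp {p : ℝ} (hp : p ∈ Set.Ioo (1 / 2) 1) :
    ∀ {n : ℕ} {t : BT ℝ n}, ZeroOne t → Bp p t ≤ balancedBp p n (ones t)
  | _, .leaf x, h => by
    rcases h x (List.mem_singleton_self x) with rfl | rfl <;>
      simp [balancedBp, balTree, Bp, ones, BT.leaves]
  | _, .node L R, h => by
    have hp' : p ∈ Set.Icc 0 1 :=
      Set.Ioo_subset_Icc_self (Set.Ioo_subset_Ioo_left (by norm_num) hp)
    obtain ⟨hL, hR⟩ := zeroOne_node.1 h
    rw [ones_node]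
    calc Bp p (.node L R) = fp p (Bp p L) (Bp p R) := rfl
      _ ≤ fp p (balancedBp p _ (ones L)) (balancedBp p _ (ones R)) :=
        fp_le_fp hp' (Bp_mem_Icc hp' hL) (balancedBp_mem_Icc hp' _ _)
          (Bp_le_balancedBp hp hL) (Bp_le_balancedBp hp hR)
      _ ≤ _ := fp_balancedBp_le hp (ones_le L) (ones_le R)

lemma exists_Bp_gt_Bp_node {p : ℝ} (hp : p ∈ Set.Ioo (1 / 2) 1) {n : ℕ} {A B : BT ℝ n}
    (hA : ZeroOne A) (hB : ZeroOne B) (hAB : ones B + 2 ≤ ones A) :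
    ∃ t : BT ℝ (n + 1),
      ZeroOne t ∧ ones t = ones A + ones B ∧ Bp p (.node A B) < Bp p t := by
  have hp' : p ∈ Set.Icc 0 1 :=
    Set.Ioo_subset_Icc_self (Set.Ioo_subset_Ioo_left (by norm_num) hp)
  obtain ⟨a, ha⟩ : ∃ a, ones A = a + 1 := ⟨ones A - 1, by omega⟩
  have hA_le := ones_le A
  refine ⟨.node (balTree n a) (balTree n (ones B + 1)),
    zeroOne_node.2 ⟨zeroOne_balTree n _, zeroOne_balTree n _⟩, ?_, ?_⟩
  · rw [ones_node, ones_balTree (by omega), ones_balTree (by omega)]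
    omega
  calc Bp p (.node A B) = fp p (Bp p A) (Bp p B) := rfl
    _ ≤ fp p (balancedBp p n (a + 1)) (balancedBp p n (ones B)) :=
      ha ▸ fp_le_fp hp' (Bp_mem_Icc hp' hA) (balancedBp_mem_Icc hp' _ _)
        (Bp_le_balancedBp hp hA) (Bp_le_balancedBp hp hB)
    _ < fp p (balancedBp p n a) (balancedBp p n (ones B + 1)) :=
      fp_balancedBp_lt_of_lt hp (by omega) (by omega)
    _ = Bp p (.node (balTree n a) (balTree n (ones B + 1))) := rfl

theorem big_optimal_balanced_general (p : ℝ) (hp : p ∈ Set.Ioo (1 / 2 : ℝ) 1)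
    (n k : ℕ)
    (t : BT ℝ (n + 1)) (ht01 : ZeroOne t) (htk : ones t = k)
    (hmax : ∀ t' : BT ℝ (n + 1), ZeroOne t' → ones t' = k → Bp p t' ≤ Bp p t)
    (L R : BT ℝ n) (hLR : t = BT.node L R) :
    |(ones L : ℤ) - (ones R : ℤ)| ≤ 1 := by
  subst hLR htk
  have not_heavier : ∀ {A B : BT ℝ n}, ZeroOne A → ZeroOne B →
      ones A + ones B = ones (.node L R) → Bp p (.node A B) = Bp p (.node L R) →
      ones A ≤ ones B + 1 := by
    intro A B hA hB hones hBp
    by_contra! hAB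
    obtain ⟨t', ht'01, ht'k, hlt⟩ := exists_Bp_gt_Bp_node hp hA hB hAB
    exact (hmax t' ht'01 (ht'k.trans hones)).not_gt (hBp ▸ hlt)
  obtain ⟨hL, hR⟩ := zeroOne_node.1 ht01
  have hLR := not_heavier hL hR (ones_node L R).symm rfl
  have hRL := not_heavier hR hL (by rw [ones_node, add_comm]) (fp_comm p _ _)
  rw [abs_le]
  omega

/-- in a big-optimal tree of depth `n+1` with exactly `k` ones,
the numbers of 1-labelled leaves in the two subtrees of the root differ by at most 1. -/
theorem big_optimal_balanced (p : ℝ) (hp : p ∈ Set.Ioo (1 / 2 : ℝ) 1)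
    (n k : ℕ) (hk : k ≤ 2 ^ (n + 1))
    (t : BT ℝ (n + 1)) (ht01 : ZeroOne t) (htk : ones t = k)
    (hmax : ∀ t' : BT ℝ (n + 1), ZeroOne t' → ones t' = k → Bp p t' ≤ Bp p t)
    (L R : BT ℝ n) (hLR : t = BT.node L R) :
    |(ones L : ℤ) - (ones R : ℤ)| ≤ 1 :=
  big_optimal_balanced_general p hp n k t ht01 htk hmax L R hLR
end
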